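/- Let X be a separable metric space, ξ, (ξ_n) X-valued random variables and (N_n) ℕ-valued random variables. If ξ_n converges weakly to ξ, the Anscombe index χ_Ansc⟨(ξ_n)⟩ satisfies χ_Ansc⟨(ξ_n)⟩ ≤ η, and there exists (k_n) positive with k_n → ∞ and λ_P(N_n/k_n → 1) ≤ θ, then λ_w(ξ_{N_n} → ξ) ≤ η + θ. -/

import Mathlib

open MeasureTheory Filter Topology

/-- Probability that the oscillation max_{⌈(1-δ)n⌉ ≤ m ≤ ⌊(1+δ)n⌋} d(ξ_n, ξ_m) is ≥ ε. -/
noncomputable def oscProb {Ω X : Type*} [MeasurableSpace Ω] [PseudoMetricSpace X]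
    (P : Measure Ω) (ξ : ℕ → Ω → X) (δ ε : ℝ) (n : ℕ) : ℝ :=
  (P {ω | ∃ m : ℕ, ⌈(1 - δ) * (n : ℝ)⌉ ≤ (m : ℤ) ∧ (m : ℤ) ≤ ⌊(1 + δ) * (n : ℝ)⌋ ∧
      ε ≤ dist (ξ n ω) (ξ m ω)}).toReal

/-- The Anscombe index χ_Ansc⟨(ξ_n)⟩. -/
noncomputable def anscIndex {Ω X : Type*} [MeasurableSpace Ω] [PseudoMetricSpace X]
    (P : Measure Ω) (ξ : ℕ → Ω → X) : ℝ :=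
  ⨆ ε : {x : ℝ // 0 < x}, ⨅ δ : {x : ℝ // 0 < x},
    limsup (fun n => oscProb P ξ δ ε n) atTop

/-- Anscombe's condition. -/
def AnscombeCond {Ω X : Type*} [MeasurableSpace Ω] [PseudoMetricSpace X]
    (P : Measure Ω) (ξ : ℕ → Ω → X) : Prop :=
  ∀ ε > (0 : ℝ), ∃ δ > (0 : ℝ), ∃ n₀ : ℕ, ∀ n ≥ n₀, oscProb P ξ δ ε n < ε

/-- λ_w via closed sets. -/
noncomputable def lamW {Ω X : Type*} [MeasurableSpace Ω] [TopologicalSpace X]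
    (P : Measure Ω) (ξ : ℕ → Ω → X) (ζ : Ω → X) : ℝ :=
  ⨆ F : {F : Set X // IsClosed F},
    limsup (fun n => (P {ω | ξ n ω ∈ F.1}).toReal - (P {ω | ζ ω ∈ F.1}).toReal) atTop

/-- λ_P, the index of convergence in probability. -/
noncomputable def lamP {Ω X : Type*} [MeasurableSpace Ω] [PseudoMetricSpace X]
    (P : Measure Ω) (ξ : ℕ → Ω → X) (ζ : Ω → X) : ℝ :=
  ⨆ ε : {x : ℝ // 0 < x},
    limsup (fun n => (P {ω | ε.1 ≤ dist (ζ ω) (ξ n ω)}).toReal) atTop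

/-- Weak convergence of X-valued random variables. -/
def WeakConv {Ω X : Type*} [MeasurableSpace Ω] [TopologicalSpace X]
    (P : Measure Ω) (ξ : ℕ → Ω → X) (ζ : Ω → X) : Prop :=
  ∀ f : X → ℝ, Continuous f → (∃ C, ∀ x, |f x| ≤ C) →
    Tendsto (fun n => ∫ ω, f (ξ n ω) ∂P) atTop (𝓝 (∫ ω, f (ζ ω) ∂P))

/-! ### Auxiliary lemmas -/

section Aux

lemma aux_isBoundedUnder_le {u : ℕ → ℝ} {b : ℝ} (h : ∀ n, u n ≤ b) :
    IsBoundedUnder (· ≤ ·) atTop u :=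
  isBoundedUnder_of ⟨b, h⟩

lemma aux_isCoboundedUnder_le {u : ℕ → ℝ} {b : ℝ} (h : ∀ n, b ≤ u n) :
    IsCoboundedUnder (· ≤ ·) atTop u :=
  (isBoundedUnder_of (r := (· ≥ ·)) ⟨b, h⟩).isCoboundedUnder_le

lemma aux_limsup_nonneg {u : ℕ → ℝ} (h0 : ∀ n, 0 ≤ u n) (h1 : ∀ n, u n ≤ 1) :
    0 ≤ limsup u atTop :=
  le_limsup_of_frequently_le (Filter.Eventually.frequently (Filter.Eventually.of_forall h0))
    (aux_isBoundedUnder_le h1)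

lemma aux_limsup_le_one {u : ℕ → ℝ} (h0 : ∀ n, 0 ≤ u n) (h1 : ∀ n, u n ≤ 1) :
    limsup u atTop ≤ 1 :=
  limsup_le_of_le (aux_isCoboundedUnder_le h0) (Filter.Eventually.of_forall h1)

lemma aux_probReal_le_one {Ω : Type*} [MeasurableSpace Ω] (P : Measure Ω)
    [IsProbabilityMeasure P] (s : Set Ω) : (P s).toReal ≤ 1 := by
  simpa using ENNReal.toReal_mono (by simp) (prob_le_one (μ := P) (s := s))

/-- Nonnegativity of the Anscombe index. -/
lemma aux_anscIndex_nonneg {Ω X : Type*} [MeasurableSpace Ω] [PseudoMetricSpace X]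
    (P : Measure Ω) [IsProbabilityMeasure P] (ξ : ℕ → Ω → X) : 0 ≤ anscIndex P ξ := by
  apply Real.iSup_nonneg
  intro ε
  apply Real.iInf_nonneg
  intro δ
  exact aux_limsup_nonneg (fun n => ENNReal.toReal_nonneg) (fun n => aux_probReal_le_one P _)

/-- Nonnegativity of lamP. -/
lemma aux_lamP_nonneg {Ω X : Type*} [MeasurableSpace Ω] [PseudoMetricSpace X]
    (P : Measure Ω) [IsProbabilityMeasure P] (ξ : ℕ → Ω → X) (ζ : Ω → X) :
    0 ≤ lamP P ξ ζ := by
  apply Real.iSup_nonneg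
  intro ε
  exact aux_limsup_nonneg (fun n => ENNReal.toReal_nonneg) (fun n => aux_probReal_le_one P _)

end Aux

theorem anscombe_index_bound {Ω X : Type*} [MeasurableSpace Ω] [MetricSpace X]
    [TopologicalSpace.SeparableSpace X] [MeasurableSpace X] [BorelSpace X]
    (P : Measure Ω) [IsProbabilityMeasure P]
    (ξ : ℕ → Ω → X) (ζ : Ω → X) (N : ℕ → Ω → ℕ)
    (hξ : ∀ n, Measurable (ξ n)) (hζ : Measurable ζ) (hN : ∀ n, Measurable (N n))
    (η θ : ℝ)
    (hw : WeakConv P ξ ζ)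
    (hχ : anscIndex P ξ ≤ η)
    (hk : ∃ k : ℕ → ℝ, (∀ n, 0 < k n) ∧ Tendsto k atTop atTop ∧
      lamP P (fun n ω => (N n ω : ℝ) / k n) (fun _ => (1 : ℝ)) ≤ θ) :
    lamW P (fun n ω => ξ (N n ω) ω) ζ ≤ η + θ := by
  obtain ⟨k, hkpos, hktop, hkP⟩ := hk
  have hη0 : 0 ≤ η := le_trans (aux_anscIndex_nonneg P ξ) hχ
  have hθ0 : 0 ≤ θ := le_trans (aux_lamP_nonneg P _ _) hkP
  have h01 : ∀ s : Set Ω, (P s).toReal ≤ 1 := aux_probReal_le_one P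
  apply Real.iSup_le _ (add_nonneg hη0 hθ0)
  rintro ⟨F, hF⟩
  rcases Set.eq_empty_or_nonempty F with rfl | hFne
  · simp only [Set.mem_empty_iff_false, Set.setOf_false, measure_empty, ENNReal.toReal_zero,
      sub_zero, sub_self]
    simpa using add_nonneg hη0 hθ0
  -- main case
  set pF : ℝ := (P {ω | ζ ω ∈ F}).toReal with hpF
  apply le_of_forall_pos_le_add
  intro c hc
  -- Step A : choose a small closed neighborhood of F
  set Ft : ℝ → Set X := fun t => {x | Metric.infDist x F ≤ t} with hFt
  have hFt_closed : ∀ t, IsClosed (Ft t) := fun t =>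
    isClosed_le (Metric.continuous_infDist_pt F) continuous_const
  have hS_meas : ∀ t, MeasurableSet (ζ ⁻¹' Ft t) := fun t => hζ (hFt_closed t).measurableSet
  have hInter : ⋂ j : ℕ, (ζ ⁻¹' Ft (1 / (j + 1))) = ζ ⁻¹' F := by
    ext ω
    simp only [Set.mem_iInter, Set.mem_preimage, hFt, Set.mem_setOf_eq]
    constructor
    · intro h
      have hle : Metric.infDist (ζ ω) F ≤ 0 := by
        by_contra hlt
        push_neg at hlt
        obtain ⟨j, hj⟩ := exists_nat_one_div_lt hlt
        exact absurd (h j) (not_le.mpr hj)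
      exact (hF.mem_iff_infDist_zero hFne).mpr (le_antisymm hle Metric.infDist_nonneg)
    · intro h j
      rw [Metric.infDist_zero_of_mem h]
      positivity
  have hS_anti : Antitone (fun j : ℕ => ζ ⁻¹' Ft (1 / ((j : ℝ) + 1))) := by
    intro j j' hjj'
    apply Set.preimage_mono
    intro x hx
    simp only [hFt, Set.mem_setOf_eq] at hx ⊢
    refine le_trans hx (one_div_le_one_div_of_le (by positivity) ?_)
    have : (j : ℝ) ≤ (j' : ℝ) := Nat.cast_le.mpr hjj'
    linarith
  have htend := tendsto_measure_iInter_atTop (μ := P)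
    (fun j : ℕ => (hS_meas (1 / ((j : ℝ) + 1))).nullMeasurableSet) hS_anti
    ⟨0, measure_ne_top P _⟩
  rw [hInter] at htend
  have htendR := (ENNReal.tendsto_toReal (measure_ne_top P (ζ ⁻¹' F))).comp htend
  have hpF' : (P (ζ ⁻¹' F)).toReal = pF := rfl
  obtain ⟨j, hj⟩ : ∃ j : ℕ, (P (ζ ⁻¹' Ft (1 / (j + 1)))).toReal < pF + c / 4 := by
    have := htendR.eventually_lt_const (by rw [hpF']; linarith : (P (ζ ⁻¹' F)).toReal < pF + c / 4)
    exact this.exists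
  set ε : ℝ := (1 / (j + 1)) / 2 with hεdef
  have hεpos : 0 < ε := by positivity
  have h2ε : 2 * ε = 1 / (j + 1) := by rw [hεdef]; ring
  -- Step B : choose δ from the Anscombe index
  have hbddB : BddAbove (Set.range fun δ : {x : ℝ // 0 < x} =>
      limsup (fun n => oscProb P ξ δ ε n) atTop) := by
    refine ⟨1, ?_⟩
    rintro _ ⟨δ, rfl⟩
    exact aux_limsup_le_one (fun n => ENNReal.toReal_nonneg) (fun n => h01 _)
  have hbddA : BddAbove (Set.range fun ε' : {x : ℝ // 0 < x} =>
      ⨅ δ : {x : ℝ // 0 < x}, limsup (fun n => oscProb P ξ δ ε' n) atTop) := by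
    refine ⟨1, ?_⟩
    rintro _ ⟨ε', rfl⟩
    refine ciInf_le_of_le ⟨0, ?_⟩ ⟨1, one_pos⟩
      (aux_limsup_le_one (fun n => ENNReal.toReal_nonneg) (fun n => h01 _))
    rintro _ ⟨δ, rfl⟩
    exact aux_limsup_nonneg (fun n => ENNReal.toReal_nonneg) (fun n => h01 _)
  have hinf : (⨅ δ : {x : ℝ // 0 < x}, limsup (fun n => oscProb P ξ δ ε n) atTop) ≤ η :=
    le_trans (le_ciSup hbddA ⟨ε, hεpos⟩) hχ
  obtain ⟨⟨δ, hδpos⟩, hδlim⟩ : ∃ δ : {x : ℝ // 0 < x},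
      limsup (fun n => oscProb P ξ δ ε n) atTop < η + c / 4 :=
    exists_lt_of_ciInf_lt (lt_of_le_of_lt hinf (by linarith))
  have hosc_ev : ∀ᶠ n in atTop, oscProb P ξ δ ε n < η + c / 4 :=
    eventually_lt_of_limsup_lt hδlim
      (aux_isBoundedUnder_le (b := 1) (fun n => h01 _))
  -- Step C : the lamP bound at level δ/2
  set aseq : ℕ → ℝ := fun n => (P {ω | δ / 2 ≤ dist (1 : ℝ) ((N n ω : ℝ) / k n)}).toReal
    with haseq
  have hA_limsup : limsup aseq atTop ≤ θ := by
    refine le_trans ?_ hkP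
    rw [lamP]
    have hbdd : BddAbove (Set.range fun ε' : {x : ℝ // 0 < x} =>
        limsup (fun n => (P {ω | ε'.1 ≤
          dist ((fun _ => (1:ℝ)) ω) ((fun n ω => (N n ω : ℝ) / k n) n ω)}).toReal) atTop) := by
      refine ⟨1, ?_⟩
      rintro _ ⟨ε', rfl⟩
      exact aux_limsup_le_one (fun n => ENNReal.toReal_nonneg) (fun n => h01 _)
    exact le_ciSup hbdd ⟨δ / 2, half_pos hδpos⟩
  have hA_ev : ∀ᶠ n in atTop, aseq n < θ + c / 4 :=
    eventually_lt_of_limsup_lt (lt_of_le_of_lt hA_limsup (by linarith))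
      (aux_isBoundedUnder_le (b := 1) (fun n => h01 _))
  -- Step D : weak convergence with a bump function
  set g : X → ℝ := fun x => min 1 (max 0 (2 - Metric.infDist x F / ε)) with hg
  have hg_cont : Continuous g := by
    apply continuous_const.min
    apply continuous_const.max
    exact continuous_const.sub ((Metric.continuous_infDist_pt F).div_const ε)
  have hg_nonneg : ∀ x, 0 ≤ g x := fun x => le_min zero_le_one (le_max_left _ _)
  have hg_le_one : ∀ x, g x ≤ 1 := fun x => min_le_left _ _
  have hg_bdd : ∀ x, |g x| ≤ 1 := fun x => abs_le.mpr ⟨by linarith [hg_nonneg x], hg_le_one x⟩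
  have hg_one : ∀ x, Metric.infDist x F ≤ ε → g x = 1 := by
    intro x hx
    have h1 : (1 : ℝ) ≤ 2 - Metric.infDist x F / ε := by
      have : Metric.infDist x F / ε ≤ 1 := (div_le_one hεpos).mpr hx
      linarith
    rw [hg]
    simp only
    rw [max_eq_right (by linarith [Metric.infDist_nonneg (s := F) (x := x)] : (0:ℝ) ≤ _),
      min_eq_left h1]
  have hg_supp : ∀ x, 2 * ε < Metric.infDist x F → g x = 0 := by
    intro x hx
    have : 2 - Metric.infDist x F / ε < 0 := by
      have : 2 < Metric.infDist x F / ε := by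
        rw [lt_div_iff₀ hεpos]; linarith
      linarith
    rw [hg]
    simp only
    rw [max_eq_left (by linarith), min_eq_right (by norm_num)]
  -- integrability facts
  have hgζ_int : Integrable (fun ω => g (ζ ω)) P := by
    refine Integrable.mono' (integrable_const 1)
      ((hg_cont.measurable.comp hζ).aestronglyMeasurable) ?_
    exact Filter.Eventually.of_forall fun ω => by simpa using hg_bdd (ζ ω)
  have hgξ_int : ∀ n, Integrable (fun ω => g (ξ n ω)) P := by
    intro n
    refine Integrable.mono' (integrable_const 1)
      ((hg_cont.measurable.comp (hξ n)).aestronglyMeasurable) ?_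
    exact Filter.Eventually.of_forall fun ω => by simpa using hg_bdd (ξ n ω)
  -- the limit is small
  have hL_le : ∫ ω, g (ζ ω) ∂P ≤ (P (ζ ⁻¹' Ft (2 * ε))).toReal := by
    have hmeas : MeasurableSet (ζ ⁻¹' Ft (2 * ε)) := hS_meas _
    have hle : (fun ω => g (ζ ω)) ≤ (ζ ⁻¹' Ft (2 * ε)).indicator 1 := by
      intro ω
      show g (ζ ω) ≤ (ζ ⁻¹' Ft (2 * ε)).indicator 1 ω
      by_cases hω : ω ∈ ζ ⁻¹' Ft (2 * ε)
      · rw [Set.indicator_of_mem hω]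
        exact hg_le_one _
      · rw [Set.indicator_of_notMem hω]
        exact le_of_eq (hg_supp (ζ ω) (not_le.mp hω))
    calc ∫ ω, g (ζ ω) ∂P ≤ ∫ ω, (ζ ⁻¹' Ft (2 * ε)).indicator 1 ω ∂P :=
          integral_mono hgζ_int ((integrable_const 1).indicator hmeas) hle
      _ = (P (ζ ⁻¹' Ft (2 * ε))).toReal := integral_indicator_one hmeas
  have hL_lt : ∫ ω, g (ζ ω) ∂P < pF + c / 4 := by
    refine lt_of_le_of_lt hL_le ?_
    rw [h2ε]
    exact hj
  -- the subsequence m n = ⌈k n⌉₊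
  set m : ℕ → ℕ := fun n => ⌈k n⌉₊ with hm
  have hm_top : Tendsto m atTop atTop := tendsto_nat_ceil_atTop.comp hktop
  have hwg := hw g hg_cont ⟨1, hg_bdd⟩
  have hC_ev : ∀ᶠ n in atTop,
      (P {ω | ξ (m n) ω ∈ Ft ε}).toReal < pF + c / 2 := by
    have hev : ∀ᶠ n in atTop, ∫ ω, g (ξ n ω) ∂P < pF + c / 2 :=
      hwg.eventually_lt_const (by linarith)
    filter_upwards [hm_top.eventually hev] with n hn
    refine lt_of_le_of_lt ?_ hn
    have hmeas : MeasurableSet {ω | ξ (m n) ω ∈ Ft ε} := (hξ (m n)) (hFt_closed ε).measurableSet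
    have hle : ({ω | ξ (m n) ω ∈ Ft ε}).indicator 1 ≤ fun ω => g (ξ (m n) ω) := by
      intro ω
      show ({ω | ξ (m n) ω ∈ Ft ε}).indicator 1 ω ≤ g (ξ (m n) ω)
      by_cases hω : ω ∈ {ω | ξ (m n) ω ∈ Ft ε}
      · rw [Set.indicator_of_mem hω]
        exact le_of_eq (hg_one _ hω).symm
      · rw [Set.indicator_of_notMem hω]
        exact hg_nonneg _
    calc (P {ω | ξ (m n) ω ∈ Ft ε}).toReal
        = ∫ ω, ({ω | ξ (m n) ω ∈ Ft ε}).indicator 1 ω ∂P := (integral_indicator_one hmeas).symm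
      _ ≤ ∫ ω, g (ξ (m n) ω) ∂P :=
          integral_mono ((integrable_const 1).indicator hmeas) (hgξ_int (m n)) hle
  -- Step E
  have hE : ∀ᶠ n in atTop, 2 / δ ≤ k n := hktop.eventually_ge_atTop (2 / δ)
  -- Step F : eventual bound and conclusion
  have hosc_ev' : ∀ᶠ n in atTop, oscProb P ξ δ ε (m n) < η + c / 4 := hm_top.eventually hosc_ev
  have hfinal : ∀ᶠ n in atTop,
      (P {ω | ξ (N n ω) ω ∈ F}).toReal - pF ≤ η + θ + c := by
    filter_upwards [hA_ev, hosc_ev', hC_ev, hE] with n ha hb hcc hke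
    -- the three events
    set A : Set Ω := {ω | δ / 2 ≤ dist (1 : ℝ) ((N n ω : ℝ) / k n)} with hA
    set B : Set Ω := {ω | ∃ m' : ℕ, ⌈(1 - δ) * ((m n : ℕ) : ℝ)⌉ ≤ (m' : ℤ) ∧
        (m' : ℤ) ≤ ⌊(1 + δ) * ((m n : ℕ) : ℝ)⌋ ∧ ε ≤ dist (ξ (m n) ω) (ξ m' ω)} with hB
    set C : Set Ω := {ω | ξ (m n) ω ∈ Ft ε} with hC
    have hsub : {ω | ξ (N n ω) ω ∈ F} ⊆ A ∪ (B ∪ C) := by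
      intro ω hω
      by_cases hωA : ω ∈ A
      · exact Or.inl hωA
      by_cases hωB : ω ∈ B
      · exact Or.inr (Or.inl hωB)
      refine Or.inr (Or.inr ?_)
      -- window arithmetic
      have hK : 0 < k n := hkpos n
      have hdist : dist (1 : ℝ) ((N n ω : ℝ) / k n) < δ / 2 := not_le.mp hωA
      rw [Real.dist_eq, abs_sub_lt_iff] at hdist
      obtain ⟨hd1, hd2⟩ := hdist
      have hNlow : k n - δ / 2 * k n < (N n ω : ℝ) := by
        have h := (lt_div_iff₀ hK).mp (by linarith : (1 : ℝ) - δ / 2 < (N n ω : ℝ) / k n)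
        have hr : ((1 : ℝ) - δ / 2) * k n = k n - δ / 2 * k n := by ring
        linarith
      have hNhigh : (N n ω : ℝ) < k n + δ / 2 * k n := by
        have h := (div_lt_iff₀ hK).mp (by linarith : (N n ω : ℝ) / k n < 1 + δ / 2)
        have hr : ((1 : ℝ) + δ / 2) * k n = k n + δ / 2 * k n := by ring
        linarith
      have hmK : (k n : ℝ) ≤ (m n : ℝ) := Nat.le_ceil (k n)
      have hmK' : ((m n : ℕ) : ℝ) < k n + 1 := Nat.ceil_lt_add_one hK.le
      have hδk : 2 ≤ δ * k n := by
        rw [div_le_iff₀ hδpos] at hke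
        linarith
      have hδm : δ * k n ≤ δ * (m n : ℝ) := mul_le_mul_of_nonneg_left hmK hδpos.le
      have hlow : (1 - δ) * ((m n : ℕ) : ℝ) ≤ (N n ω : ℝ) := by
        have hr : (1 - δ) * ((m n : ℕ) : ℝ) = ((m n : ℕ) : ℝ) - δ * ((m n : ℕ) : ℝ) := by ring
        linarith
      have hhigh : (N n ω : ℝ) ≤ (1 + δ) * ((m n : ℕ) : ℝ) := by
        have hr : (1 + δ) * ((m n : ℕ) : ℝ) = ((m n : ℕ) : ℝ) + δ * ((m n : ℕ) : ℝ) := by ring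
        linarith
      have hceil : ⌈(1 - δ) * ((m n : ℕ) : ℝ)⌉ ≤ ((N n ω : ℕ) : ℤ) := by
        rw [Int.ceil_le]
        push_cast
        exact hlow
      have hfloor : ((N n ω : ℕ) : ℤ) ≤ ⌊(1 + δ) * ((m n : ℕ) : ℝ)⌋ := by
        rw [Int.le_floor]
        push_cast
        exact hhigh
      have hnd : ¬ (ε ≤ dist (ξ (m n) ω) (ξ (N n ω) ω)) := by
        intro hcon
        exact hωB ⟨N n ω, hceil, hfloor, hcon⟩
      have : Metric.infDist (ξ (m n) ω) F ≤ ε :=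
        le_trans (Metric.infDist_le_dist_of_mem hω) (not_le.mp hnd).le
      exact this
    have hmeasbound : P {ω | ξ (N n ω) ω ∈ F} ≤ P A + P B + P C := by
      calc P {ω | ξ (N n ω) ω ∈ F} ≤ P (A ∪ (B ∪ C)) := measure_mono hsub
        _ ≤ P A + P (B ∪ C) := measure_union_le _ _
        _ ≤ P A + (P B + P C) := add_le_add_right (measure_union_le _ _) _
        _ = P A + P B + P C := by ring
    have hRne : P A + P B + P C ≠ ⊤ := by
      exact ENNReal.add_ne_top.mpr ⟨ENNReal.add_ne_top.mpr ⟨measure_ne_top P _,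
        measure_ne_top P _⟩, measure_ne_top P _⟩
    have htr : (P {ω | ξ (N n ω) ω ∈ F}).toReal ≤ (P A).toReal + (P B).toReal + (P C).toReal := by
      have := ENNReal.toReal_mono hRne hmeasbound
      rwa [ENNReal.toReal_add (ENNReal.add_ne_top.mpr ⟨measure_ne_top P _, measure_ne_top P _⟩)
        (measure_ne_top P _), ENNReal.toReal_add (measure_ne_top P _) (measure_ne_top P _)]
        at this
    have ha' : (P A).toReal < θ + c / 4 := ha
    have hb' : (P B).toReal < η + c / 4 := hb
    have hc' : (P C).toReal < pF + c / 2 := hcc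
    linarith
  have hcob : IsCoboundedUnder (· ≤ ·) atTop
      (fun n => (P {ω | ξ (N n ω) ω ∈ F}).toReal - pF) :=
    aux_isCoboundedUnder_le (b := -pF) (fun n => by
      have : (0:ℝ) ≤ (P {ω | ξ (N n ω) ω ∈ F}).toReal := ENNReal.toReal_nonneg
      linarith)
  calc limsup (fun n => (P {ω | ξ (N n ω) ω ∈ F}).toReal - pF) atTop
      ≤ η + θ + c := limsup_le_of_le hcob hfinal
    _ = (η + θ) + c := by ring
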